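/- arXiv:2601.14980 — 2 statements merged into one kernel-verified Lean document; each statement's English description precedes it below -/
import Mathlib

section
/- Paillier decryption correctness: let p, q be distinct odd primes, n = pq, g = n + 1, λ = lcm(p−1, q−1), and L(x) = (x−1)/n for x ≡ 1 mod n. Then for any m ∈ {0,1,…,n−1} and any r coprime to n, L((g^m r^n)^λ mod n²) · (L(g^λ mod n²))^{-1} ≡ m (mod n). -/
private lemma pail_binom (n k : ℕ) : (n+1)^k ≡ 1 + k*n [MOD n^2] := by
  induction k with
  | zero => simp [Nat.ModEq.refl]
  | succ k ih =>
    have h2 : (n+1)^(k+1) ≡ (1 + k*n) * (n+1) [MOD n^2] := by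
      rw [pow_succ]; exact ih.mul_right _
    have h3 : (1 + k*n)*(n+1) = (1 + (k+1)*n) + k*n^2 := by ring
    have h4 : (1 + (k+1)*n) + k*n^2 ≡ (1 + (k+1)*n) + 0 [MOD n^2] :=
      Nat.ModEq.add_left _ ((Nat.modEq_zero_iff_dvd).mpr (dvd_mul_left _ _))
    simpa using (h2.trans (h3 ▸ h4))

private lemma pail_L (n a x : ℕ) (hn : 2 ≤ n) (hx : x ≡ 1 + a*n [MOD n^2]) :
    (x % n^2 - 1)/n = a % n := by
  have hn0 : 0 < n := by omega
  have hb : a % n < n := Nat.mod_lt _ hn0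
  have hlt : 1 + (a % n)*n < n^2 := by nlinarith
  have hmod : a*n ≡ (a % n)*n [MOD n*n] :=
    Nat.ModEq.mul_right' n (Nat.mod_modEq a n).symm
  have hx2 : x ≡ 1 + (a % n)*n [MOD n^2] := by
    refine hx.trans ?_
    have := Nat.ModEq.add_left 1 hmod
    simpa [sq] using this
  have : x % n^2 = 1 + (a % n)*n := by
    have h := hx2
    unfold Nat.ModEq at h
    rw [Nat.mod_eq_of_lt hlt] at h
    exact h
  rw [this]
  simp [Nat.mul_div_cancel _ hn0]

theorem paillier_decryption_correctness (p q : ℕ) (hp : p.Prime) (hq : q.Prime)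
    (hpq : p ≠ q) (hp2 : p ≠ 2) (hq2 : q ≠ 2)
    (n : ℕ) (hn : n = p * q)
    (lam : ℕ) (hlam : lam = Nat.lcm (p - 1) (q - 1))
    (g : ℕ) (hg : g = n + 1)
    (m : ℕ) (hm : m < n)
    (r : ℕ) (hr : Nat.Coprime r n)
    (inv : ℕ)
    (hinv : ((g ^ lam % n ^ 2 - 1) / n) * inv ≡ 1 [MOD n]) :
    (((g ^ m * r ^ n) ^ lam % n ^ 2 - 1) / n) * inv ≡ m [MOD n] := by
  have hp2' : 2 ≤ p := hp.two_le
  have hq2' : 2 ≤ q := hq.two_le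
  have hn2 : 2 ≤ n := by rw [hn]; nlinarith
  -- r^(n*lam) ≡ 1 mod n^2
  have hrp : Nat.Coprime r (p^2) :=
    (Nat.Coprime.coprime_dvd_right (hn ▸ dvd_mul_right p q) hr).pow_right _
  have hrq : Nat.Coprime r (q^2) :=
    (Nat.Coprime.coprime_dvd_right (hn ▸ dvd_mul_left q p) hr).pow_right _
  have eulerP : r ^ (n * lam) ≡ 1 [MOD p^2] := by
    have htot : Nat.totient (p^2) = p * (p-1) := by
      rw [Nat.totient_prime_pow hp (by norm_num)]; ring_nf
    have hdvd : Nat.totient (p^2) ∣ n * lam := by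
      rw [htot, hn, hlam]
      exact Dvd.dvd.trans (mul_dvd_mul_left p (Nat.dvd_lcm_left _ _))
        ⟨q, by ring⟩
    obtain ⟨k, hk⟩ := hdvd
    rw [hk, pow_mul]
    simpa using (Nat.ModEq.pow_totient hrp).pow k
  have eulerQ : r ^ (n * lam) ≡ 1 [MOD q^2] := by
    have htot : Nat.totient (q^2) = q * (q-1) := by
      rw [Nat.totient_prime_pow hq (by norm_num)]; ring_nf
    have hdvd : Nat.totient (q^2) ∣ n * lam := by
      rw [htot, hn, hlam]
      exact Dvd.dvd.trans (mul_dvd_mul_left q (Nat.dvd_lcm_right _ _))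
        ⟨p, by ring⟩
    obtain ⟨k, hk⟩ := hdvd
    rw [hk, pow_mul]
    simpa using (Nat.ModEq.pow_totient hrq).pow k
  have hcop : Nat.Coprime (p^2) (q^2) :=
    Nat.Coprime.pow _ _ ((Nat.coprime_primes hp hq).mpr hpq)
  have eulerN : r ^ (n * lam) ≡ 1 [MOD n^2] := by
    have := (Nat.modEq_and_modEq_iff_modEq_mul hcop).mp ⟨eulerP, eulerQ⟩
    have hnn : n^2 = p^2 * q^2 := by rw [hn]; ring
    rwa [hnn]
  -- main congruences
  have hC : (g ^ m * r ^ n) ^ lam ≡ 1 + (m*lam)*n [MOD n^2] := by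
    have h1 : (g ^ m * r ^ n) ^ lam = g^(m*lam) * r^(n*lam) := by
      rw [mul_pow, ← pow_mul, ← pow_mul]
    rw [h1, hg]
    calc (n+1)^(m*lam) * r^(n*lam)
        ≡ (1 + (m*lam)*n) * 1 [MOD n^2] := (pail_binom n (m*lam)).mul eulerN
      _ = 1 + (m*lam)*n := by ring
  have hG : g ^ lam ≡ 1 + lam*n [MOD n^2] := hg ▸ pail_binom n lam
  have hL1 : ((g ^ m * r ^ n) ^ lam % n^2 - 1)/n = (m*lam) % n :=
    pail_L n (m*lam) _ hn2 hC
  have hL2 : (g ^ lam % n^2 - 1)/n = lam % n := pail_L n lam _ hn2 hG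
  rw [hL2] at hinv
  rw [hL1]
  calc (m*lam % n) * inv
      ≡ (m*lam) * inv [MOD n] := ((Nat.mod_modEq _ _)).mul_right _
    _ = m * (lam * inv) := by ring
    _ ≡ m * ((lam % n) * inv) [MOD n] :=
        (((Nat.mod_modEq lam n).symm.mul_right inv).mul_left m)
    _ ≡ m * 1 [MOD n] := hinv.mul_left m
    _ = m := by ring
end

section
/- Barrett reduction correctness: let n ≥ 1, let len be such that n < 2^len, and set R = ⌊2^{2·len}/n⌋. Then for any a with 0 ≤ a < 2^{2·len}, the quantity T = a − ⌊a·R/2^{2·len}⌋·n satisfies 0 ≤ T < 2n, and hence a mod n equals T if T < n and T − n otherwise. -/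
/-!
Let `M = 2 ^ (2 * len)`, `R = M / n`, `q = a * R / M` and `k = a / n`. Since `n * R ≤ M`, the
estimate `q` never exceeds the true quotient `k`; since `M - n * R = M % n < n` and `a < M`, the
error `a * (M - n * R)` is below `M * n`, so `q` falls short of `k` by at most one. Hence
`a - q * n` is `a % n` or `a % n + n`, and one conditional subtraction of `n` yields `a % n`.
-/

theorem sub_mul_eq_mod_add_of_le_div {a n q : ℕ} (h : q ≤ a / n) :
    a - q * n = a % n + (a / n - q) * n := by
  have hdiv := Nat.mod_add_div' a n
  have hmul := Nat.mul_le_mul_right n h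
  rw [Nat.sub_mul]
  omega

theorem sub_mul_lt_two_mul_of_le_div_of_div_le_succ {a n q : ℕ} (hn : 0 < n)
    (h₁ : q ≤ a / n) (h₂ : a / n ≤ q + 1) : a - q * n < 2 * n := by
  have hmod := Nat.mod_lt a hn
  rw [sub_mul_eq_mod_add_of_le_div h₁]
  rcases (show a / n - q = 0 ∨ a / n - q = 1 by omega) with h | h <;> rw [h] <;> omega

theorem mod_eq_ite_sub_mul_of_le_div_of_div_le_succ {a n q : ℕ}
    (h₁ : q ≤ a / n) (h₂ : a / n ≤ q + 1) :
    a % n = if a - q * n < n then a - q * n else a - q * n - n := by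
  rcases n.eq_zero_or_pos with rfl | hn
  · simp
  have hmod := Nat.mod_lt a hn
  rw [sub_mul_eq_mod_add_of_le_div h₁]
  rcases (show a / n - q = 0 ∨ a / n - q = 1 by omega) with h | h <;>
    simp only [h, zero_mul, one_mul, add_zero] <;> split_ifs <;> omega

theorem mul_div_div_le_div (a n M : ℕ) : a * (M / n) / M ≤ a / n := by
  rw [mul_comm]
  exact Nat.div_mul_div_le_div M a n

theorem div_le_mul_div_div_add_one {a n M : ℕ} (hn : 0 < n) (ha : a < M) :
    a / n ≤ a * (M / n) / M + 1 := by
  have hM : 0 < M := by omega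
  have key : a * M ≤ n * (a * (M / n) + M) :=
    calc a * M = n * (a * (M / n)) + a * (M % n) := by
          conv_lhs => rw [← Nat.div_add_mod M n]
          ring
      _ ≤ n * (a * (M / n)) + M * n :=
          Nat.add_le_add_left (Nat.mul_le_mul ha.le (Nat.mod_lt M hn).le) _
      _ = n * (a * (M / n) + M) := by ring
  rw [← Nat.add_div_right _ hM, Nat.le_div_iff_mul_le hM]
  calc a / n * M ≤ a * M / n := (Nat.le_div_iff_mul_le hn).2 <| by
        rw [mul_right_comm]
        exact Nat.mul_le_mul_right M (Nat.div_mul_le_self a n)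
    _ ≤ a * (M / n) + M := Nat.div_le_of_le_mul key

theorem barrett_reduction_correct_general (n len : ℕ) (hn : 1 ≤ n)
    (a : ℕ) (ha : a < 2 ^ (2 * len)) :
    a - a * (2 ^ (2 * len) / n) / 2 ^ (2 * len) * n < 2 * n ∧
      a % n =
        (if a - a * (2 ^ (2 * len) / n) / 2 ^ (2 * len) * n < n then
          a - a * (2 ^ (2 * len) / n) / 2 ^ (2 * len) * n
        else
          a - a * (2 ^ (2 * len) / n) / 2 ^ (2 * len) * n - n) := by
  have h₁ := mul_div_div_le_div a n (2 ^ (2 * len))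
  have h₂ := div_le_mul_div_div_add_one hn ha
  exact ⟨sub_mul_lt_two_mul_of_le_div_of_div_le_succ hn h₁ h₂,
    mod_eq_ite_sub_mul_of_le_div_of_div_le_succ h₁ h₂⟩

theorem barrett_reduction_correct (n len : ℕ) (hn : 1 ≤ n) (hlen : n < 2 ^ len)
    (a : ℕ) (ha : a < 2 ^ (2 * len)) :
    a - a * (2 ^ (2 * len) / n) / 2 ^ (2 * len) * n < 2 * n ∧
      a % n =
        (if a - a * (2 ^ (2 * len) / n) / 2 ^ (2 * len) * n < n then
          a - a * (2 ^ (2 * len) / n) / 2 ^ (2 * len) * n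
        else
          a - a * (2 ^ (2 * len) / n) / 2 ^ (2 * len) * n - n) :=
  barrett_reduction_correct_general n len hn a ha
end
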